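/- arXiv:2001.08417 — 2 statements merged into one kernel-verified Lean document; each statement's English description precedes it below -/
import Mathlib

section
/- (Type C.2) Let π ∈ S_n and let w_1 = π_a and w_2 = π_b with 1 ≤ a ≤ b ≤ n. Suppose w_1 = v_i and w_2 = v_j are dells of π with i < j, and suppose: if Prec_π(w_1) = y_{i−1} and y_{i−1} ≠ y_0 then w_2 < Prec_π(w_1), and if Next_π(w_2) = y_{j+1} and y_{j+1} ≠ y_{p+1} then w_1 < Next_π(w_2). Then the reversal ρ(w_1, w_2) is balanced for π. -/
/-- The block reversal: reverses the block of `π` between positions `a` and `b`. -/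
def rev (π : ℕ → ℕ) (a b : ℕ) : ℕ → ℕ := fun i =>
  if a ≤ i ∧ i ≤ b then π (a + b - i) else π i

/-- Position `i` holds a pinnacle: `π (i-1) < π i > π (i+1)`. -/
def PinAt (π : ℕ → ℕ) (i : ℕ) : Prop := π (i - 1) < π i ∧ π (i + 1) < π i

/-- Position `i` holds a dell: `π (i-1) > π i < π (i+1)`. -/
def DellAt (π : ℕ → ℕ) (i : ℕ) : Prop := π i < π (i - 1) ∧ π i < π (i + 1)

/-- Position `i` is ascending: its element belongs to an ascending set of `π`. -/
def AscAt (π : ℕ → ℕ) (i : ℕ) : Prop := π (i - 1) < π i ∧ π i < π (i + 1)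

/-- Position `i` is descending: its element belongs to a descending set of `π`. -/
def DescAt (π : ℕ → ℕ) (i : ℕ) : Prop := π i < π (i - 1) ∧ π (i + 1) < π i

/-- The pinnacle set of `π ∈ S_n`, as a finset of values. -/
def pinFinset (n : ℕ) (π : ℕ → ℕ) : Finset ℕ :=
  ((Finset.Icc 1 n).filter fun i => π (i - 1) < π i ∧ π (i + 1) < π i).image π

/-- The reversal with endpoints at positions `a ≤ b` is balanced for `π`:
it does not modify the pinnacle set. -/
def BalancedRev (n : ℕ) (π : ℕ → ℕ) (a b : ℕ) : Prop :=
  pinFinset n (rev π a b) = pinFinset n π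

/-- Apply a sequence of reversals (each given by its pair of positions). -/
def applySeq (π : ℕ → ℕ) : List (ℕ × ℕ) → ℕ → ℕ
  | [] => π
  | ab :: L => applySeq (rev π ab.1 ab.2) L

/-- Every reversal of the sequence is balanced for the permutation to which
it is applied. -/
def IsBalancedSeq (n : ℕ) (π : ℕ → ℕ) : List (ℕ × ℕ) → Prop
  | [] => True
  | ab :: L => 1 ≤ ab.1 ∧ ab.1 ≤ ab.2 ∧ ab.2 ≤ n ∧ BalancedRev n π ab.1 ab.2 ∧
      IsBalancedSeq n (rev π ab.1 ab.2) L

/-- `π` is the extension of a permutation of `{1,…,n}` by the boundary values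
`π 0 = n+1` and `π (n+1) = n+2`. -/
def IsExtPerm (n : ℕ) (π : ℕ → ℕ) : Prop :=
  Set.BijOn π (Set.Icc 1 n) (Set.Icc 1 n) ∧ π 0 = n + 1 ∧ π (n + 1) = n + 2

/-- The positions of the pinnacles of `π`, from left to right. -/
def pinPosList (n : ℕ) (π : ℕ → ℕ) : List ℕ :=
  ((Finset.Icc 1 n).filter fun i => π (i - 1) < π i ∧ π (i + 1) < π i).sort (· ≤ ·)

/-- The positions of the dells of `π`, from left to right. -/
def dellPosList (n : ℕ) (π : ℕ → ℕ) : List ℕ :=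
  ((Finset.Icc 1 n).filter fun i => π i < π (i - 1) ∧ π i < π (i + 1)).sort (· ≤ ·)

/-- The pinnacles `y_1, …, y_p` of `π`, from left to right. -/
def pinList (n : ℕ) (π : ℕ → ℕ) : List ℕ := (pinPosList n π).map π

/-- The dells `v_1, …, v_{p+1}` of `π`, from left to right. -/
def dellList (n : ℕ) (π : ℕ → ℕ) : List ℕ := (dellPosList n π).map π

/-- The position of the dell `v q` (dells are indexed from `1`). -/
def vPos (n : ℕ) (π : ℕ → ℕ) (q : ℕ) : ℕ := (dellPosList n π).getD (q - 1) 0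

/-- The dell `v q`. -/
def vVal (n : ℕ) (π : ℕ → ℕ) (q : ℕ) : ℕ := π (vPos n π q)

/-- The position of the pinnacle `y q`, where `y 0` is at position `0` and
`y (p+1)` is at position `n+1`. -/
def yPos (n : ℕ) (π : ℕ → ℕ) (q : ℕ) : ℕ :=
  if q = 0 then 0 else (pinPosList n π).getD (q - 1) (n + 1)

/-- The pinnacle `y q`, where `y 0 = π 0 = n+1` and `y (p+1) = π (n+1) = n+2`. -/
def yVal (n : ℕ) (π : ℕ → ℕ) (q : ℕ) : ℕ := π (yPos n π q)

/-- The elements of `π` at positions `1, …, n`, read from left to right. -/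
def toList (n : ℕ) (π : ℕ → ℕ) : List ℕ := (List.range n).map fun i => π (i + 1)

/-- The cutpoint `cutA_π(z, v_q, y_q)`: the largest element `e` of
`A_π(v_q, y_q) ∪ {v_q}` such that `e < z`. -/
noncomputable def cutA (n : ℕ) (π : ℕ → ℕ) (q z : ℕ) : ℕ :=
  sSup ((insert (vVal n π q) (π '' Set.Ioo (vPos n π q) (yPos n π q))) ∩ Set.Iio z)

/-- The cutpoint `cutD_π(z, y_{q-1}, v_q)`: the largest element `e` of
`D_π(y_{q-1}, v_q) ∪ {v_q}` such that `e < z`. -/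
noncomputable def cutD (n : ℕ) (π : ℕ → ℕ) (q z : ℕ) : ℕ :=
  sSup ((insert (vVal n π q) (π '' Set.Ioo (yPos n π (q - 1)) (vPos n π q))) ∩ Set.Iio z)

/-- The canonical permutation `Id_S ∈ S_n` (extended by its boundary values):
the elements of `S` in increasing order at positions `2, 4, …, 2|S|`, and the
elements of `{1,…,n} \ S` in increasing order at the remaining positions. -/
def canon (n : ℕ) (S : Finset ℕ) : ℕ → ℕ := fun i =>
  if i = 0 then n + 1
  else if i = n + 1 then n + 2
  else if i ≤ 2 * S.card ∧ i % 2 = 0 then (S.sort (· ≤ ·)).getD (i / 2 - 1) 0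
  else if i ≤ 2 * S.card then (((Finset.Icc 1 n) \ S).sort (· ≤ ·)).getD ((i - 1) / 2) 0
  else (((Finset.Icc 1 n) \ S).sort (· ≤ ·)).getD (i - S.card - 1) 0

lemma rev_in (π : ℕ → ℕ) {a b i : ℕ} (h1 : a ≤ i) (h2 : i ≤ b) :
    rev π a b i = π (a + b - i) := by
  simp only [rev]
  rw [if_pos ⟨h1, h2⟩]

lemma rev_out (π : ℕ → ℕ) {a b i : ℕ} (h : ¬ (a ≤ i ∧ i ≤ b)) :
    rev π a b i = π i := by
  simp only [rev]
  rw [if_neg h]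

/-- Type C.2. Suppose `w₁ = π a` and `w₂ = π b` are dells
`v_i`, `v_j` of `π` with `i < j` (equivalently `1 ≤ a < b ≤ n`). If
`w₂ < Prec π w₁` whenever `Prec π w₁` is a pinnacle of `π` distinct from `y_0`
(i.e. whenever position `a-1` is a pinnacle position), and `w₁ < Next π w₂`
whenever `Next π w₂` is a pinnacle of `π` distinct from `y_{p+1}` (i.e. whenever
`b+1 ≤ n` is a pinnacle position), then `ρ(w₁, w₂)` is balanced for `π`. -/
theorem statement10 (n : ℕ) (π : ℕ → ℕ) (hπ : IsExtPerm n π) (a b : ℕ)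
    (ha : 1 ≤ a) (hab : a < b) (hb : b ≤ n)
    (h1 : DellAt π a) (h2 : DellAt π b)
    (hc1 : PinAt π (a - 1) → π b < π (a - 1))
    (hc2 : b + 1 ≤ n → PinAt π (b + 1) → π a < π (b + 1)) :
    BalancedRev n π a b := by
  set ρ := rev π a b with hρ
  set σ : ℕ → ℕ := fun i => if a ≤ i ∧ i ≤ b then a + b - i else i with hσ
  obtain ⟨hd1a, hd1b⟩ := h1
  obtain ⟨hd2a, hd2b⟩ := h2
  -- basic facts about σ
  have hσval : ∀ i, ρ i = π (σ i) := by
    intro i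
    by_cases h : a ≤ i ∧ i ≤ b
    · rw [hρ, rev_in π h.1 h.2]; simp [hσ, h]
    · rw [hρ, rev_out π h]; simp [hσ, h]
  have hσrange : ∀ i, 1 ≤ i → i ≤ n → 1 ≤ σ i ∧ σ i ≤ n := by
    intro i hi1 hi2
    simp only [hσ]
    split_ifs with h
    · omega
    · omega
  have hσinv : ∀ i, σ (σ i) = i := by
    intro i
    by_cases h : a ≤ i ∧ i ≤ b
    · have h1' : σ i = a + b - i := by simp [hσ, h]
      have h2' : a ≤ a + b - i ∧ a + b - i ≤ b := ⟨by omega, by omega⟩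
      rw [h1']
      have : σ (a + b - i) = a + b - (a + b - i) := by simp [hσ, h2']
      rw [this]; omega
    · have h1' : σ i = i := by simp [hσ, h]
      rw [h1', h1']
  -- the key equivalence
  have key : ∀ i, 1 ≤ i → i ≤ n → (PinAt ρ i ↔ PinAt π (σ i)) := by
    intro i hi1 hi2
    have hσi : σ i = if a ≤ i ∧ i ≤ b then a + b - i else i := rfl
    by_cases hA : i + 1 < a
    · -- far left: untouched
      have e0 : ρ (i - 1) = π (i - 1) := by rw [hρ, rev_out]; omega
      have e1 : ρ i = π i := by rw [hρ, rev_out]; omega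
      have e2 : ρ (i + 1) = π (i + 1) := by rw [hρ, rev_out]; omega
      have : σ i = i := by rw [hσi, if_neg]; omega
      rw [this]; unfold PinAt; rw [e0, e1, e2]
    by_cases hB : i + 1 = a
    · -- i = a - 1
      have e0 : ρ (i - 1) = π (i - 1) := by rw [hρ, rev_out]; omega
      have e1 : ρ i = π i := by rw [hρ, rev_out]; omega
      have e2 : ρ (i + 1) = π b := by
        have : ρ (i + 1) = π (a + b - (i + 1)) := by rw [hρ, rev_in] <;> omega
        rw [this]; congr 1; try omega
      have hia : i = a - 1 := by omega
      have : σ i = i := by rw [hσi, if_neg]; omega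
      rw [this]; unfold PinAt; rw [e0, e1, e2]
      constructor
      · rintro ⟨u, v⟩
        refine ⟨u, ?_⟩
        rw [hia]
        have : a - 1 + 1 = a := by omega
        rw [this]
        exact hd1a
      · rintro ⟨u, v⟩
        refine ⟨u, ?_⟩
        have := hc1 (by rw [← hia]; exact ⟨u, by rw [hia]; rw [show a - 1 + 1 = a by omega]; exact hd1a⟩)
        rw [hia]; exact this
    by_cases hC : i = a
    · -- i = a : ρ a = π b, not a pinnacle on either side
      have e1 : ρ i = π b := by
        have : ρ i = π (a + b - i) := by rw [hρ, rev_in] <;> omega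
        rw [this]; congr 1; try omega
      have e2 : ρ (i + 1) = π (b - 1) := by
        have : ρ (i + 1) = π (a + b - (i + 1)) := by rw [hρ, rev_in] <;> omega
        rw [this]; congr 1; try omega
      have hσa : σ i = b := by rw [hσi, if_pos ⟨by omega, by omega⟩]; omega
      rw [hσa]; unfold PinAt
      constructor
      · rintro ⟨u, v⟩
        rw [e2, e1] at v
        omega
      · rintro ⟨u, v⟩
        exfalso
        omega
    by_cases hD : i < b
    · -- strictly interior: a < i < b
      have hai : a < i := by omega
      have e0 : ρ (i - 1) = π (a + b - i + 1) := by
        have : ρ (i - 1) = π (a + b - (i - 1)) := by rw [hρ, rev_in] <;> omega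
        rw [this]; congr 1; try omega
      have e1 : ρ i = π (a + b - i) := by rw [hρ, rev_in] <;> omega
      have e2 : ρ (i + 1) = π (a + b - i - 1) := by
        have : ρ (i + 1) = π (a + b - (i + 1)) := by rw [hρ, rev_in] <;> omega
        rw [this]; congr 1; try omega
      have hσi' : σ i = a + b - i := by rw [hσi, if_pos ⟨by omega, by omega⟩]
      rw [hσi']; unfold PinAt; rw [e0, e1, e2]
      have e3 : a + b - i - 1 = a + b - i - 1 := rfl
      have e4 : a + b - i + 1 = (a + b - i) + 1 := rfl
      constructor
      · rintro ⟨u, v⟩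
        exact ⟨by rw [show a + b - i - 1 = (a+b-i) - 1 from rfl] at v; exact v, u⟩
      · rintro ⟨u, v⟩
        exact ⟨v, u⟩
    by_cases hE : i = b
    · -- i = b : ρ b = π a, not a pinnacle on either side
      have e0 : ρ (i - 1) = π (a + 1) := by
        have : ρ (i - 1) = π (a + b - (i - 1)) := by rw [hρ, rev_in] <;> omega
        rw [this]; congr 1; try omega
      have e1 : ρ i = π a := by
        have : ρ i = π (a + b - i) := by rw [hρ, rev_in] <;> omega
        rw [this]; congr 1; try omega
      have hσb : σ i = a := by rw [hσi, if_pos ⟨by omega, by omega⟩]; omega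
      rw [hσb]; unfold PinAt
      constructor
      · rintro ⟨u, v⟩
        rw [e0, e1] at u
        omega
      · rintro ⟨u, v⟩
        exfalso
        omega
    by_cases hF : i = b + 1
    · -- i = b + 1
      have e0 : ρ (i - 1) = π a := by
        have : ρ (i - 1) = π (a + b - (i - 1)) := by rw [hρ, rev_in] <;> omega
        rw [this]; congr 1; try omega
      have e1 : ρ i = π i := by rw [hρ, rev_out]; omega
      have e2 : ρ (i + 1) = π (i + 1) := by rw [hρ, rev_out]; omega
      have hi' : i - 1 = b := by omega
      have hpe : π i = π (b + 1) := by rw [hF]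
      have : σ i = i := by rw [hσi, if_neg]; omega
      rw [this]; unfold PinAt; rw [e0, e1, e2]
      constructor
      · rintro ⟨u, v⟩
        refine ⟨?_, v⟩
        rw [hi', hpe]
        exact hd2b
      · rintro ⟨u, v⟩
        refine ⟨?_, v⟩
        rw [hpe]
        apply hc2 (by omega)
        refine ⟨?_, ?_⟩
        · rw [show b + 1 - 1 = b from rfl, ← hpe, ← hi']; exact u
        · rw [← hpe, ← hF]; exact v
    · -- far right
      have e0 : ρ (i - 1) = π (i - 1) := by rw [hρ, rev_out]; omega
      have e1 : ρ i = π i := by rw [hρ, rev_out]; omega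
      have e2 : ρ (i + 1) = π (i + 1) := by rw [hρ, rev_out]; omega
      have : σ i = i := by rw [hσi, if_neg]; omega
      rw [this]; unfold PinAt; rw [e0, e1, e2]
  -- conclude
  unfold BalancedRev pinFinset
  apply Finset.ext
  intro x
  simp only [Finset.mem_image, Finset.mem_filter, Finset.mem_Icc]
  constructor
  · rintro ⟨i, ⟨⟨hi1, hi2⟩, hpin⟩, hval⟩
    obtain ⟨hs1, hs2⟩ := hσrange i hi1 hi2
    refine ⟨σ i, ⟨⟨hs1, hs2⟩, ?_⟩, ?_⟩
    · exact (key i hi1 hi2).mp hpin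
    · rw [← hσval i]; exact hval
  · rintro ⟨j, ⟨⟨hj1, hj2⟩, hpin⟩, hval⟩
    obtain ⟨hs1, hs2⟩ := hσrange j hj1 hj2
    refine ⟨σ j, ⟨⟨hs1, hs2⟩, ?_⟩, ?_⟩
    · have := (key (σ j) hs1 hs2)
      rw [hσinv j] at this
      exact this.mpr hpin
    · show ρ (σ j) = x
      rw [hσval (σ j), hσinv j]; exact hval
end

section
/- Let π ∈ S_n be a permutation with pinnacle set S, |S| = p. There is a sequence R_1 of balanced reversals transforming π into a permutation whose pinnacles appear in increasing order from left to right, where R_1 consists of at most one reversal when p = 2, and of at most 2p − 4 reversals when p ≥ 3. -/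
/-!
Selection sort on the pinnacles: the largest pinnacle of the still unsorted prefix is moved to the
end of that prefix by reversing the block of pinnacles running from it to the last unsorted one.
This costs one reversal per pinnacle except the last, so `p - 1` reversals suffice, which is at
most `1` for `p = 2` and at most `2p - 4` for `p ≥ 3`.

Reversing the positions `a, …, b` keeps every pinnacle (reversing the order of those inside the
block) as soon as the edges `(a - 1, a)` and `(b, b + 1)` run in opposite directions and overlap in
value. Such a cut exists in the valleys bordering the block `y_q, …, y_s` whenever
`y_s < y_q < y_{s+1}`: with `m₁, m₂` the lowest points of the two valleys, a discrete intermediate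
value argument finds two edges crossing the level `max (π m₁) (π m₂)` in opposite directions.
-/

open List

def reflect (a b i : ℕ) : ℕ := if a ≤ i ∧ i ≤ b then a + b - i else i

theorem reflect_involutive (a b : ℕ) : Function.Involutive (reflect a b) := by
  intro i
  unfold reflect
  split_ifs <;> omega

theorem reflect_of_mem {a b i : ℕ} (h₁ : a ≤ i) (h₂ : i ≤ b) : reflect a b i = a + b - i :=
  if_pos ⟨h₁, h₂⟩

theorem reflect_of_not_mem {a b i : ℕ} (h : i < a ∨ b < i) : reflect a b i = i :=
  if_neg (by omega)

theorem reflect_mapsTo {n a b : ℕ} (ha : 1 ≤ a) (hbn : b ≤ n) :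
    Set.MapsTo (reflect a b) (Set.Icc 1 n) (Set.Icc 1 n) := by
  intro i ⟨h₁, h₂⟩
  unfold reflect
  constructor <;> split_ifs <;> omega

theorem reflect_bijOn {n a b : ℕ} (ha : 1 ≤ a) (hbn : b ≤ n) :
    Set.BijOn (reflect a b) (Set.Icc 1 n) (Set.Icc 1 n) :=
  Set.InvOn.bijOn ⟨fun i _ => reflect_involutive a b i, fun i _ => reflect_involutive a b i⟩
    (reflect_mapsTo ha hbn) (reflect_mapsTo ha hbn)

theorem rev_eq_comp (π : ℕ → ℕ) (a b : ℕ) : rev π a b = π ∘ reflect a b := by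
  funext i
  simp only [rev, reflect, Function.comp_apply]
  split_ifs <;> rfl

theorem rev_of_not_mem (π : ℕ → ℕ) {a b i : ℕ} (h : i < a ∨ b < i) : rev π a b i = π i :=
  if_neg (by omega)

section Pinnacles

variable {n : ℕ} {π : ℕ → ℕ}

theorem IsExtPerm.apply_le (hπ : IsExtPerm n π) {k : ℕ} (h₁ : 1 ≤ k) (h₂ : k ≤ n) :
    π k ≤ n :=
  (hπ.1.mapsTo ⟨h₁, h₂⟩).2

theorem IsExtPerm.injOn (hπ : IsExtPerm n π) : Set.InjOn π (Set.Iic (n + 1)) := by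
  obtain ⟨hbij, h₀, hn⟩ := hπ
  have hval : ∀ k, 1 ≤ k → k ≤ n → 1 ≤ π k ∧ π k ≤ n := fun k h₁ h₂ => hbij.mapsTo ⟨h₁, h₂⟩
  have hinj : ∀ i j, 1 ≤ i → i ≤ n → 1 ≤ j → j ≤ n → π i = π j → i = j :=
    fun i j h₁ h₂ h₃ h₄ => hbij.injOn ⟨h₁, h₂⟩ ⟨h₃, h₄⟩
  intro i hi j hj hij
  simp only [Set.mem_Iic] at hi hj
  grind

theorem IsExtPerm.rev (hπ : IsExtPerm n π) {a b : ℕ} (ha : 1 ≤ a) (hbn : b ≤ n) :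
    IsExtPerm n (rev π a b) := by
  refine ⟨?_, ?_, ?_⟩
  · rw [rev_eq_comp]
    exact hπ.1.comp (reflect_bijOn ha hbn)
  · rw [rev_of_not_mem π (by omega)]; exact hπ.2.1
  · rw [rev_of_not_mem π (by omega)]; exact hπ.2.2

theorem mem_pinPosList {k : ℕ} : k ∈ pinPosList n π ↔ (1 ≤ k ∧ k ≤ n) ∧ PinAt π k := by
  simp [pinPosList, PinAt]

theorem pinPosList_sorted (n : ℕ) (π : ℕ → ℕ) : (pinPosList n π).Pairwise (· < ·) :=
  (Finset.sortedLT_sort _).pairwise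

theorem pinFinset_eq_toFinset (n : ℕ) (π : ℕ → ℕ) : pinFinset n π = (pinList n π).toFinset := by
  ext y
  simp [pinFinset, pinList, pinPosList]

theorem IsExtPerm.pinList_nodup (hπ : IsExtPerm n π) : (pinList n π).Nodup := by
  refine (Finset.sort_nodup _ _).map_on fun i hi j hj hij => hπ.injOn ?_ ?_ hij
  · simp only [Set.mem_Iic]; have := (mem_pinPosList.1 hi).1.2; omega
  · simp only [Set.mem_Iic]; have := (mem_pinPosList.1 hj).1.2; omega

end Pinnacles

/-- Swapping the inner endpoints `a` and `b` of the edges `(a - 1, a)` and `(b, b + 1)` keeps the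
up/down pattern at both cuts. -/
def IsCompatibleCut {α : Type*} [LinearOrder α] (f : ℕ → α) (a b : ℕ) : Prop :=
  (f a < f (a - 1) ∧ f b < f (b + 1) ∧ f b < f (a - 1) ∧ f a < f (b + 1)) ∨
  (f (a - 1) < f a ∧ f (b + 1) < f b ∧ f (a - 1) < f b ∧ f (b + 1) < f a)

section Reversal

variable {n : ℕ} {π : ℕ → ℕ} {a b : ℕ}

theorem pinAt_rev_iff (hcut : IsCompatibleCut π a b) {i : ℕ} :
    PinAt (rev π a b) i ↔ PinAt π (reflect a b i) := by
  unfold PinAt IsCompatibleCut at *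
  grind [rev, reflect]

theorem mem_pinPosList_rev (ha : 1 ≤ a) (hbn : b ≤ n) (hcut : IsCompatibleCut π a b) {k : ℕ} :
    k ∈ pinPosList n (rev π a b) ↔ reflect a b k ∈ pinPosList n π := by
  have hk : k ∈ Set.Icc 1 n ↔ reflect a b k ∈ Set.Icc 1 n :=
    ⟨fun h => reflect_mapsTo ha hbn h,
      fun h => reflect_involutive a b k ▸ reflect_mapsTo ha hbn h⟩
  rw [mem_pinPosList, mem_pinPosList, ← Set.mem_Icc, ← Set.mem_Icc, hk, pinAt_rev_iff hcut]

theorem pinPosList_rev (ha : 1 ≤ a) (hbn : b ≤ n) (hcut : IsCompatibleCut π a b)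
    {U B Z : List ℕ} (hP : pinPosList n π = U ++ B ++ Z)
    (hU : ∀ k ∈ U, k < a) (hB : ∀ k ∈ B, a ≤ k ∧ k ≤ b) (hZ : ∀ k ∈ Z, b < k) :
    pinPosList n (rev π a b) = U ++ (B.map (reflect a b)).reverse ++ Z := by
  have hsort := pinPosList_sorted n π
  rw [hP] at hsort
  have hBr : ∀ k ∈ B, a ≤ reflect a b k ∧ reflect a b k ≤ b := fun k hk => by
    rw [reflect_of_mem (hB k hk).1 (hB k hk).2]; have := hB k hk; omega
  apply (pinPosList_sorted n _).eq_of_mem_iff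
  · simp only [pairwise_append, pairwise_reverse, pairwise_map, mem_append, mem_reverse,
      mem_map] at hsort ⊢
    refine ⟨⟨hsort.1.1, ?_, ?_⟩, hsort.2.1, ?_⟩
    · refine hsort.1.2.1.imp_of_mem fun {j k} hj hk hjk => ?_
      rw [reflect_of_mem (hB j hj).1 (hB j hj).2, reflect_of_mem (hB k hk).1 (hB k hk).2]
      have := hB j hj; have := hB k hk; omega
    · rintro i hi _ ⟨j, hj, rfl⟩
      exact (hU i hi).trans_le (hBr j hj).1
    · rintro i (hi | ⟨j, hj, rfl⟩) k hk
      · exact hsort.2.2 i (Or.inl hi) k hk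
      · exact (hBr j hj).2.trans_lt (hZ k hk)
  · intro k
    rw [mem_pinPosList_rev ha hbn hcut, hP]
    have hfix : ∀ l : List ℕ, (∀ j ∈ l, j < a ∨ b < j) → (reflect a b k ∈ l ↔ k ∈ l) := by
      intro l hl
      by_cases hk : a ≤ k ∧ k ≤ b
      · rw [reflect_of_mem hk.1 hk.2]
        exact ⟨fun h => by have := hl _ h; omega, fun h => by have := hl _ h; omega⟩
      · rw [reflect_of_not_mem (by omega)]
    simp only [mem_append, mem_reverse, List.mem_map_of_involutive (reflect_involutive a b),
      hfix U fun j hj => Or.inl (hU j hj), hfix Z fun j hj => Or.inr (hZ j hj)]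

theorem pinList_rev (ha : 1 ≤ a) (hbn : b ≤ n) (hcut : IsCompatibleCut π a b)
    {U B Z : List ℕ} (hP : pinPosList n π = U ++ B ++ Z)
    (hU : ∀ k ∈ U, k < a) (hB : ∀ k ∈ B, a ≤ k ∧ k ≤ b) (hZ : ∀ k ∈ Z, b < k) :
    pinList n (rev π a b) = U.map π ++ (B.map π).reverse ++ Z.map π := by
  have hfix : ∀ l : List ℕ, (∀ j ∈ l, j < a ∨ b < j) → l.map (π ∘ reflect a b) = l.map π :=
    fun l hl => map_congr_left fun j hj => by simp [reflect_of_not_mem (hl j hj)]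
  rw [pinList, pinPosList_rev ha hbn hcut hP hU hB hZ, rev_eq_comp]
  simp only [map_append, map_reverse, map_map, Function.comp_assoc,
    (reflect_involutive a b).comp_self, Function.comp_id, hfix U fun j hj => Or.inl (hU j hj),
    hfix Z fun j hj => Or.inr (hZ j hj)]

end Reversal

theorem exists_change_point {P : ℕ → Prop} {i j : ℕ} (hij : i ≤ j) (hi : P i) (hj : ¬ P j) :
    ∃ k, i ≤ k ∧ k < j ∧ P k ∧ ¬ P (k + 1) := by
  induction j, hij using Nat.le_induction with
  | base => exact absurd hi hj
  | succ j hij ih =>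
    by_cases h : P j
    · exact ⟨j, hij, j.lt_succ_self, h, hj⟩
    · obtain ⟨k, hik, hkj, hk⟩ := ih h
      exact ⟨k, hik, hkj.trans j.lt_succ_self, hk⟩

section Cuts

variable {α : Type*} [LinearOrder α] {f : ℕ → α}

theorem exists_lt_between_peaks {i j : ℕ} (hij : i < j) (hi : f (i + 1) < f i)
    (hj : f (j - 1) < f j) : ∃ m, i < m ∧ m < j ∧ f m < f i ∧ f m < f j := by
  obtain ⟨m, hm, hmin⟩ := (Finset.Icc i j).exists_min_image f ⟨i, by simp [hij.le]⟩
  rw [Finset.mem_Icc] at hm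
  have hmi : f m < f i := (hmin (i + 1) (by simp; omega)).trans_lt hi
  have hmj : f m < f j := (hmin (j - 1) (by simp; omega)).trans_lt hj
  refine ⟨m, lt_of_le_of_ne hm.1 ?_, lt_of_le_of_ne hm.2 ?_, hmi, hmj⟩
  · rintro rfl; exact hmi.false
  · rintro rfl; exact hmj.false

theorem exists_compatibleCut {i X Y j : ℕ} (hiX : i < X) (hYj : Y < j)
    (hi : f (i + 1) < f i) (hX : f (X - 1) < f X) (hY : f (Y + 1) < f Y) (hj : f (j - 1) < f j)
    (hYX : f Y < f X) (hXj : f X < f j) :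
    ∃ a b, i < a ∧ a ≤ X ∧ Y ≤ b ∧ b < j ∧ IsCompatibleCut f a b := by
  obtain ⟨m₁, him₁, hm₁X, hm₁i, hm₁X'⟩ := exists_lt_between_peaks hiX hi hX
  obtain ⟨m₂, hYm₂, hm₂j, hm₂Y, hm₂j'⟩ := exists_lt_between_peaks hYj hY hj
  set t := max (f m₁) (f m₂)
  have ht₁ : f m₁ ≤ t := le_max_left _ _
  have ht₂ : f m₂ ≤ t := le_max_right _ _
  rcases lt_or_ge (f Y) (f i) with hYi | hiY
  · obtain ⟨k, hik, hkm, hk, hk'⟩ := exists_change_point (P := fun k => t < f k) him₁.le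
      (max_lt hm₁i (hm₂Y.trans hYi)) (not_lt.2 ht₁)
    obtain ⟨l, hml, hlj, hl, hl'⟩ := exists_change_point (P := fun k => f k ≤ t) hm₂j.le ht₂
      (not_le.2 (max_lt (hm₁X'.trans hXj) hm₂j'))
    simp only [not_lt, not_le] at hk' hl'
    refine ⟨k + 1, l, by omega, by omega, by omega, hlj, Or.inl ?_⟩
    simp only [Nat.add_sub_cancel]
    exact ⟨hk'.trans_lt hk, hl.trans_lt hl', hl.trans_lt hk, hk'.trans_lt hl'⟩
  · obtain ⟨k, hik, hkm, hk, hk'⟩ := exists_change_point (P := fun k => f k ≤ t) hm₁X.le ht₁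
      (not_le.2 (max_lt ((hm₁i.trans_le hiY).trans hYX) (hm₂Y.trans hYX)))
    obtain ⟨l, hml, hlj, hl, hl'⟩ := exists_change_point (P := fun k => t < f k) hYm₂.le
      (max_lt (hm₁i.trans_le hiY) hm₂Y) (not_lt.2 ht₂)
    simp only [not_lt, not_le] at hk' hl'
    refine ⟨k + 1, l, by omega, by omega, hml, by omega, Or.inr ?_⟩
    simp only [Nat.add_sub_cancel]
    exact ⟨hk.trans_lt hk', hl'.trans_lt hl, hk.trans_lt hl, hl'.trans_lt hk'⟩

end Cuts

theorem applySeq_append (π : ℕ → ℕ) (L₁ L₂ : List (ℕ × ℕ)) :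
    applySeq π (L₁ ++ L₂) = applySeq (applySeq π L₁) L₂ := by
  induction L₁ generalizing π with
  | nil => rfl
  | cons ab L₁ ih => exact ih _

section Sorting

variable {n : ℕ} {π : ℕ → ℕ}

theorem IsBalancedSeq.append {L₁ L₂ : List (ℕ × ℕ)} (h₁ : IsBalancedSeq n π L₁)
    (h₂ : IsBalancedSeq n (applySeq π L₁) L₂) : IsBalancedSeq n π (L₁ ++ L₂) := by
  induction L₁ generalizing π with
  | nil => exact h₂
  | cons ab L₁ ih => exact ⟨h₁.1, h₁.2.1, h₁.2.2.1, h₁.2.2.2.1, ih h₁.2.2.2.2 h₂⟩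

theorem IsBalancedSeq.isExtPerm {L : List (ℕ × ℕ)} (hπ : IsExtPerm n π)
    (hL : IsBalancedSeq n π L) : IsExtPerm n (applySeq π L) := by
  induction L generalizing π with
  | nil => exact hπ
  | cons ab L ih => exact ih (hπ.rev hL.1 hL.2.2.1) hL.2.2.2.2

theorem exists_peak_before (hπ : IsExtPerm n π) {U R : List ℕ} {X : ℕ}
    (hP : pinPosList n π = U ++ X :: R) : ∃ i < X, π (i + 1) < π i ∧ ∀ k ∈ U, k ≤ i := by
  have hX := (mem_pinPosList.1 (show X ∈ pinPosList n π by simp [hP])).1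
  rcases U.eq_nil_or_concat with rfl | ⟨U, v, rfl⟩
  · refine ⟨0, hX.1, ?_, by simp⟩
    have := hπ.apply_le le_rfl (hX.1.trans hX.2)
    rw [zero_add, hπ.2.1]
    omega
  · have hv := mem_pinPosList.1 (show v ∈ pinPosList n π by simp [hP])
    have hsort := pinPosList_sorted n π
    simp only [hP, concat_eq_append, pairwise_append, pairwise_cons, mem_append, mem_cons,
      not_mem_nil, or_false] at hsort
    refine ⟨v, hsort.2.2 v (Or.inr rfl) X (Or.inl rfl), hv.2.2, ?_⟩
    simp only [concat_eq_append, mem_append, mem_singleton]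
    rintro k (hk | rfl)
    · exact (hsort.1.2.2 k hk v rfl).le
    · exact le_rfl

theorem exists_peak_after (hπ : IsExtPerm n π) {L Z : List ℕ} {Y : ℕ}
    (hP : pinPosList n π = L ++ Y :: Z) :
    ∃ j, Y < j ∧ j ≤ n + 1 ∧ π (j - 1) < π j ∧ (∀ k ∈ Z, j ≤ k) ∧ (j = n + 1 ∨ j ∈ Z) := by
  have hY := (mem_pinPosList.1 (show Y ∈ pinPosList n π by simp [hP])).1
  rcases Z with _ | ⟨j, Z⟩
  · refine ⟨n + 1, by omega, le_rfl, ?_, by simp, Or.inl rfl⟩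
    have := hπ.apply_le (hY.1.trans hY.2) le_rfl
    rw [hπ.2.2, Nat.add_sub_cancel]
    omega
  · have hj := mem_pinPosList.1 (show j ∈ pinPosList n π by simp [hP])
    have hsort := pinPosList_sorted n π
    simp only [hP, pairwise_append, pairwise_cons, mem_cons] at hsort
    refine ⟨j, hsort.2.1.1 j (Or.inl rfl), by omega, hj.2.1, ?_, Or.inr mem_cons_self⟩
    intro k hk
    rcases mem_cons.1 hk with rfl | hk
    · exact le_rfl
    · exact (hsort.2.1.2.1 k hk).le

theorem exists_rev_pinList_reverse_block (hπ : IsExtPerm n π) {u w z : List ℕ} {x y : ℕ}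
    (h : pinList n π = u ++ x :: w ++ y :: z) (hyx : y < x) (hz : ∀ t ∈ z, x < t) :
    ∃ a b, 1 ≤ a ∧ a ≤ b ∧ b ≤ n ∧ pinList n (rev π a b) = u ++ y :: w.reverse ++ x :: z := by
  obtain ⟨A, C, hP, hA, hC⟩ := map_eq_append_iff.1 h
  obtain ⟨Y, Z, rfl, rfl, rfl⟩ := map_eq_cons_iff.1 hC
  obtain ⟨U, D, rfl, rfl, hD⟩ := map_eq_append_iff.1 hA
  obtain ⟨X, W, rfl, rfl, rfl⟩ := map_eq_cons_iff.1 hD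
  obtain ⟨hXn, hX⟩ := mem_pinPosList.1 (show X ∈ pinPosList n π by simp [hP])
  obtain ⟨hYn, hY⟩ := mem_pinPosList.1 (show Y ∈ pinPosList n π by simp [hP])
  have hsort := pinPosList_sorted n π
  simp only [hP, pairwise_append, pairwise_cons, mem_append, mem_cons] at hsort
  obtain ⟨i, hiX, hi, hUi⟩ := exists_peak_before hπ (hP.trans (append_assoc _ _ _))
  obtain ⟨j, hYj, hjn, hj, hZj, hj'⟩ := exists_peak_after hπ hP
  have hXj : π X < π j := by
    rcases hj' with rfl | hjZ
    · have := hπ.apply_le hXn.1 hXn.2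
      rw [hπ.2.2]
      omega
    · exact hz _ (mem_map_of_mem hjZ)
  obtain ⟨a, b, hia, haX, hYb, hbj, hcut⟩ := exists_compatibleCut hiX hYj hi hX.1 hY.2 hj hyx hXj
  have hXY : X < Y := hsort.2.2 X (Or.inr (Or.inl rfl)) Y (Or.inl rfl)
  have hB : ∀ k ∈ X :: W ++ [Y], a ≤ k ∧ k ≤ b := by
    intro k hk
    simp only [cons_append, mem_cons, mem_append, not_mem_nil, or_false] at hk
    rcases hk with rfl | hk | rfl
    · omega
    · have := hsort.1.2.1.1 k hk
      have := hsort.2.2 k (Or.inr (Or.inr hk)) Y (Or.inl rfl)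
      omega
    · omega
  refine ⟨a, b, by omega, by omega, by omega, ?_⟩
  rw [pinList_rev (by omega) (by omega) hcut (by rw [hP]; simp)
    (fun k hk => (hUi k hk).trans_lt hia) hB (fun k hk => hbj.trans_le (hZj k hk))]
  simp

theorem exists_balancedSeq_move_max (hπ : IsExtPerm n π) {u w z : List ℕ} {x : ℕ}
    (h : pinList n π = u ++ x :: w ++ z) (hw : ∀ t ∈ w, t < x) (hz : ∀ t ∈ z, x < t) :
    ∃ L, L.length ≤ min 1 w.length ∧ IsBalancedSeq n π L ∧
      pinList n (applySeq π L) = u ++ w.reverse ++ x :: z := by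
  rcases w.eq_nil_or_concat with rfl | ⟨w, y, rfl⟩
  · exact ⟨[], by simp, trivial, by simpa [applySeq] using h⟩
  obtain ⟨a, b, ha, hab, hbn, hrev⟩ := exists_rev_pinList_reverse_block hπ (w := w) (y := y)
    (by simpa using h) (hw y (by simp)) hz
  refine ⟨[(a, b)], by simp, ⟨ha, hab, hbn, ?_, trivial⟩, by simpa [applySeq] using hrev⟩
  rw [BalancedRev, pinFinset_eq_toFinset, pinFinset_eq_toFinset, hrev, h]
  ext t
  simp only [mem_toFinset, mem_append, mem_cons, mem_reverse, concat_eq_append]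
  tauto

theorem exists_balancedSeq_sorted (hπ : IsExtPerm n π) {l₁ l₂ : List ℕ}
    (h : pinList n π = l₁ ++ l₂) (hl₂ : l₂.Pairwise (· < ·)) (hlt : ∀ x ∈ l₁, ∀ y ∈ l₂, x < y) :
    ∃ L, IsBalancedSeq n π L ∧ (pinList n (applySeq π L)).Pairwise (· < ·) ∧
      L.length ≤ l₁.length - 1 := by
  induction hlen : l₁.length using Nat.strong_induction_on generalizing π l₁ l₂ with
  | _ r ih =>
  rcases eq_or_ne l₁ [] with rfl | hne
  · exact ⟨[], trivial, by simpa [applySeq, h] using hl₂, by simp⟩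
  obtain ⟨M, hM, hmax⟩ := l₁.toFinset.exists_max_image id (by simpa using hne)
  obtain ⟨u, w, rfl⟩ := append_of_mem (mem_toFinset.1 hM)
  have hMuw : M ∉ u ++ w :=
    (nodup_cons.1 (nodup_middle.1 (h ▸ hπ.pinList_nodup).of_append_left)).1
  have huw : ∀ t ∈ u ++ w, t < M := fun t ht =>
    lt_of_le_of_ne (hmax t (by simp_all)) fun hM' => hMuw (hM' ▸ ht)
  have hMl₂ : ∀ t ∈ l₂, M < t := hlt M (by simp)
  have hcross : ∀ x ∈ u ++ w.reverse, ∀ y ∈ M :: l₂, x < y := by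
    intro x hx y hy
    have hxM := huw x (by simpa using hx)
    rcases mem_cons.1 hy with rfl | hy
    · exact hxM
    · exact hxM.trans (hMl₂ y hy)
  obtain ⟨L₀, hL₀, hbal₀, hpin₀⟩ := exists_balancedSeq_move_max hπ (by simpa using h)
    (fun t ht => huw t (by simp [ht])) hMl₂
  obtain ⟨L, hbal, hsorted, hL⟩ := ih (u ++ w.reverse).length (by simp at hlen ⊢; omega)
    (hbal₀.isExtPerm hπ) hpin₀ (pairwise_cons.2 ⟨hMl₂, hl₂⟩) hcross rfl
  refine ⟨L₀ ++ L, hbal₀.append hbal, by rwa [applySeq_append], ?_⟩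
  simp only [length_append, length_reverse, length_cons] at hL hL₀ hlen ⊢
  omega

end Sorting

/-- Proposition 4.3. For `π ∈ S_n` with pinnacle set `S`,
`|S| = p`, there is a sequence `R₁` of balanced reversals — of at most one
reversal when `p = 2`, and of at most `2p - 4` reversals when `p ≥ 3` —
transforming `π` into a permutation whose pinnacles appear in increasing order
from left to right. -/
theorem statement14 (n : ℕ) (π : ℕ → ℕ) (hπ : IsExtPerm n π)
    (S : Finset ℕ) (hS : S = pinFinset n π) (p : ℕ) (hp : p = S.card) :
    ∃ L : List (ℕ × ℕ), IsBalancedSeq n π L ∧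
      List.Pairwise (· < ·) (pinList n (applySeq π L)) ∧
      (p = 2 → L.length ≤ 1) ∧
      (3 ≤ p → L.length ≤ 2 * p - 4) := by
  obtain ⟨L, hbal, hsorted, hlen⟩ :=
    exists_balancedSeq_sorted hπ (append_nil _).symm .nil (by simp)
  have hcard : p = (pinList n π).length := by
    rw [hp, hS, pinFinset_eq_toFinset, toFinset_card_of_nodup hπ.pinList_nodup]
  exact ⟨L, hbal, hsorted, fun _ => by omega, fun _ => by omega⟩
end
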